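/- arXiv:1703.07988 — 3 statements merged into one kernel-verified Lean document; each statement's English description precedes it below -/
import Mathlib

section
/- With F̄ as above on (M, Q, g): F̄(x, y, Q³z) + F̄(x, Qy, z) = F̄(x, z, Q³y) + F̄(x, Qz, y) for all vector fields x, y, z. -/
/- Abstract setting for a Riemannian manifold `(M, Q, g)`: `V` is the module of
vector fields, `g` a symmetric metric tensor, `nabla` the Levi-Civita
connection (`d x f` denotes the derivative of the scalar `f` in direction `x`,
and `compat` is metric compatibility), and `Q` an endomorphism field with
`Q⁴ = id` which is an isometry for `g`. -/

theorem Fbar_symmetry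
    {V : Type*} [AddCommGroup V] [Module ℝ V]
    (g : V →ₗ[ℝ] V →ₗ[ℝ] ℝ) (gsymm : ∀ x y, g x y = g y x)
    (nabla : V → V → V) (d : V → ℝ → ℝ)
    (compat : ∀ x y z, d x (g y z) = g (nabla x y) z + g y (nabla x z))
    (Q : Module.End ℝ V)
    (hQ4 : ∀ y, Q (Q (Q (Q y))) = y)
    (hiso : ∀ x y, g (Q x) (Q y) = g x y)
    (Fbar : V → V → V → ℝ)
    (hFbar : ∀ x y z, Fbar x y z = g (nabla x (Q y) - Q (nabla x y)) z) :
    ∀ x y z, Fbar x y (Q (Q (Q z))) + Fbar x (Q y) z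
      = Fbar x z (Q (Q (Q y))) + Fbar x (Q z) y := by
  have h3 : ∀ a b, g a (Q (Q (Q b))) = g (Q a) b := by
    intro a b
    have h := hiso a (Q (Q (Q b)))
    rw [hQ4] at h
    exact h.symm
  have hP : ∀ a b, g (Q (Q a)) b = g a (Q (Q b)) := by
    intro a b
    conv_lhs => rw [← hQ4 b]
    rw [hiso, hiso]
  intro x y z
  simp only [hFbar, map_sub, LinearMap.sub_apply, h3]
  have c1 := compat x (Q (Q y)) z
  have c2 := compat x (Q (Q z)) y
  have e1 : g (Q (Q y)) z = g (Q (Q z)) y := by rw [hP, gsymm]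
  have e2 : g (Q (Q (nabla x y))) z = g (Q (Q z)) (nabla x y) := by
    rw [hP, gsymm]
  have e3 : g (Q (Q (nabla x z))) y = g (Q (Q y)) (nabla x z) := by
    rw [hP, gsymm]
  rw [e1] at c1
  linarith
end

section
/- With F̄ as above on (M, Q, g): F̄(x, y, Q³z) = −F̄(x, Q²z, Qy) for all vector fields x, y, z. -/
/- Abstract setting for a Riemannian manifold `(M, Q, g)`: `V` is the module of
vector fields, `g` a symmetric metric tensor, `nabla` the Levi-Civita
connection (`d x f` denotes the derivative of the scalar `f` in direction `x`,
and `compat` is metric compatibility), and `Q` an endomorphism field with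
`Q⁴ = id` which is an isometry for `g`. -/

theorem Fbar_Q3_skew
    {V : Type*} [AddCommGroup V] [Module ℝ V]
    (g : V →ₗ[ℝ] V →ₗ[ℝ] ℝ) (gsymm : ∀ x y, g x y = g y x)
    (nabla : V → V → V) (d : V → ℝ → ℝ)
    (compat : ∀ x y z, d x (g y z) = g (nabla x y) z + g y (nabla x z))
    (Q : Module.End ℝ V)
    (hQ4 : ∀ y, Q (Q (Q (Q y))) = y)
    (hiso : ∀ x y, g (Q x) (Q y) = g x y)
    (Fbar : V → V → V → ℝ)
    (hFbar : ∀ x y z, Fbar x y z = g (nabla x (Q y) - Q (nabla x y)) z) :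
    ∀ x y z, Fbar x y (Q (Q (Q z))) = -Fbar x (Q (Q z)) (Q y) := by
  intro x y z
  rw [hFbar, hFbar]
  simp only [map_sub, LinearMap.sub_apply]
  have h1 := compat x (Q y) (Q (Q (Q z)))
  have h2 := compat x y (Q (Q z))
  have e0 : g (Q y) (Q (Q (Q z))) = g y (Q (Q z)) := hiso y (Q (Q z))
  rw [e0] at h1
  have e1 : g (Q (nabla x y)) (Q (Q (Q z))) = g (nabla x y) (Q (Q z)) :=
    hiso (nabla x y) (Q (Q z))
  have e2 : g (Q (nabla x (Q (Q z)))) (Q y) = g (nabla x (Q (Q z))) y :=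
    hiso (nabla x (Q (Q z))) y
  have s1 := gsymm (Q y) (nabla x (Q (Q (Q z))))
  have s2 := gsymm y (nabla x (Q (Q z)))
  linarith
end

section
/- Let (M, Q, g) be with Q⁴ = id, g(Qx,Qy) = g(x,y), P = Q², F(x,y,z) = g((∇ₓP)y,z), F̄(x,y,z) = g((∇ₓQ)y,z). Then F(x, y, Pz) = F̄(x, y, Qz) + F̄(x, Qy, Q²z) for all vector fields x, y, z. Consequently, (M,P,g) satisfies the W₂ cyclic condition F(x,y,Pz) + F(y,z,Px) + F(z,x,Py) = 0 if and only if F̄(x,y,Qz) + F̄(x,Qy,Q²z) + F̄(y,z,Qx) + F̄(y,Qz,Q²x) + F̄(z,x,Qy) + F̄(z,Qx,Q²y) = 0. -/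
/- Abstract setting for a Riemannian manifold `(M, Q, g)`: `V` is the module of
vector fields, `g` a symmetric metric tensor, `nabla` the Levi-Civita
connection (`d x f` denotes the derivative of the scalar `f` in direction `x`,
and `compat` is metric compatibility), and `Q` an endomorphism field with
`Q⁴ = id` which is an isometry for `g`. -/

theorem W2_condition_iff
    {V : Type*} [AddCommGroup V] [Module ℝ V]
    (g : V →ₗ[ℝ] V →ₗ[ℝ] ℝ) (gsymm : ∀ x y, g x y = g y x)
    (nabla : V → V → V) (d : V → ℝ → ℝ)
    (compat : ∀ x y z, d x (g y z) = g (nabla x y) z + g y (nabla x z))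
    (Q : Module.End ℝ V)
    (hQ4 : ∀ y, Q (Q (Q (Q y))) = y)
    (hiso : ∀ x y, g (Q x) (Q y) = g x y)
    (F Fbar : V → V → V → ℝ)
    (hF : ∀ x y z, F x y z = g (nabla x (Q (Q y)) - Q (Q (nabla x y))) z)
    (hFbar : ∀ x y z, Fbar x y z = g (nabla x (Q y) - Q (nabla x y)) z) :
    (∀ x y z, F x y (Q (Q z)) = Fbar x y (Q z) + Fbar x (Q y) (Q (Q z))) ∧
    ((∀ x y z, F x y (Q (Q z)) + F y z (Q (Q x)) + F z x (Q (Q y)) = 0) ↔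
      ∀ x y z, Fbar x y (Q z) + Fbar x (Q y) (Q (Q z))
        + Fbar y z (Q x) + Fbar y (Q z) (Q (Q x))
        + Fbar z x (Q y) + Fbar z (Q x) (Q (Q y)) = 0) := by
  have key : ∀ x y z, F x y (Q (Q z)) = Fbar x y (Q z) + Fbar x (Q y) (Q (Q z)) := by
    intro x y z
    rw [hF, hFbar, hFbar]
    have hsplit : nabla x (Q (Q y)) - Q (Q (nabla x y)) =
        Q (nabla x (Q y) - Q (nabla x y)) + (nabla x (Q (Q y)) - Q (nabla x (Q y))) := by
      rw [map_sub]; abel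
    rw [hsplit, map_add, LinearMap.add_apply, hiso]
  refine ⟨key, ?_⟩
  constructor
  · intro h x y z
    have := h x y z
    rw [key x y z, key y z x, key z x y] at this
    linarith
  · intro h x y z
    have := h x y z
    rw [key x y z, key y z x, key z x y]
    linarith
end
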